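/- Define the Hodge star as the k[x]-linear map from k[x_1,...,x_n,θ_1,...,θ_n] to k[x_1,...,x_n,ψ_1,...,ψ_n] sending θ_I to (-1)^{deg(I)}ψ_{[n]\I} where deg(I) = Σ_{i∈I}(i−1). Then for all f, g in k[x,θ], f ⊙ (★g) = ★(f·g), where f·g is the action substituting ∂^x and contraction ∂^θ, and f ⊙ h is the action substituting ∂^x and left-multiplication by ψ. -/

import Mathlib

open Finset

/-- The super-polynomial ring `k[x₁,…,xₙ,θ₁,…,θₙ]` (resp. `k[x,ψ]`), modelled on its
monomial basis `x^α θ_I` (resp. `x^α ψ_I`) indexed by pairs `(α, I)`. -/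
abbrev SuperPoly (n : ℕ) := ((Fin n →₀ ℕ) × Finset (Fin n)) →₀ ℂ

variable (n : ℕ)

/-- Partial differentiation `∂/∂xᵢ`. -/
noncomputable def opX (i : Fin n) : Module.End ℂ (SuperPoly n) :=
  Finsupp.lsum ℂ fun b =>
    ((b.1 i : ℂ)) • Finsupp.lsingle (b.1.update i (b.1 i - 1), b.2)

/-- Contraction `∂/∂θᵢ`. -/
noncomputable def opTheta (i : Fin n) : Module.End ℂ (SuperPoly n) :=
  Finsupp.lsum ℂ fun b =>
    if i ∈ b.2 then
      ((-1 : ℂ) ^ (b.2.filter (· < i)).card) • Finsupp.lsingle (b.1, b.2.erase i)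
    else 0

/-- Left multiplication `m_i^ψ` by `ψᵢ`. -/
noncomputable def opPsi (i : Fin n) : Module.End ℂ (SuperPoly n) :=
  Finsupp.lsum ℂ fun b =>
    if i ∈ b.2 then 0
    else ((-1 : ℂ) ^ (b.2.filter (· < i)).card) • Finsupp.lsingle (b.1, insert i b.2)

/-- The operator `(∂^x)^α = ∏ᵢ ∂ᵢ^{αᵢ}`. -/
noncomputable def opXMon (α : Fin n →₀ ℕ) : Module.End ℂ (SuperPoly n) :=
  ((List.finRange n).map fun i => (opX n i) ^ (α i)).prod

/-- `θ_I(∂^θ) = ∂_{i₁} ∘ ⋯ ∘ ∂_{i_r}` for `I = {i₁ < ⋯ < i_r}`. -/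
noncomputable def opThetaMon (I : Finset (Fin n)) : Module.End ℂ (SuperPoly n) :=
  ((I.sort (· ≤ ·)).map (opTheta n)).prod

/-- `θ_I(m^ψ) = m_{i₁} ∘ ⋯ ∘ m_{i_r}` for `I = {i₁ < ⋯ < i_r}`. -/
noncomputable def opPsiMon (I : Finset (Fin n)) : Module.End ℂ (SuperPoly n) :=
  ((I.sort (· ≤ ·)).map (opPsi n)).prod

/-- The action `f · g := f̄(∂^x, ∂^θ)(g)`. -/
noncomputable def cdot (f g : SuperPoly n) : SuperPoly n :=
  f.sum fun b c => (starRingEnd ℂ) c • ((opXMon n b.1 * opThetaMon n b.2) g)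

/-- The action `f ⊙ h := f̄(∂^x, m^ψ)(h)`. -/
noncomputable def odot (f h : SuperPoly n) : SuperPoly n :=
  f.sum fun b c => (starRingEnd ℂ) c • ((opXMon n b.1 * opPsiMon n b.2) h)

/-- The Hodge star: the `k[x]`-linear map `θ_I ↦ (-1)^{deg(I)} ψ_{[n]∖I}` where
`deg(I) = Σ_{i∈I}(i-1)` (`i-1` is `i.val` for zero-based indices). -/
noncomputable def hodgeStar : Module.End ℂ (SuperPoly n) :=
  Finsupp.lsum ℂ fun b =>
    ((-1 : ℂ) ^ (∑ i ∈ b.2, (i : ℕ))) • Finsupp.lsingle (b.1, b.2ᶜ)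

/-! The Hodge star commutes with every `∂/∂xᵢ` and intertwines the contraction `∂/∂θᵢ` with
left multiplication by `ψᵢ`: on `θ_I` with `i ∈ I` the two resulting signs differ by
`(-1)^{2·#{j ∉ I | j < i}}`, because `#{j ∈ I | j < i} + #{j ∉ I | j < i} = i`. Hence `★`
intertwines the operators by which a monomial of `f` acts on both sides, and the theorem
follows by linearity in `f`. -/

theorem SemiconjBy.list_prod_map {M ι : Type*} [Monoid M] {x : M} {f g : ι → M} :
    ∀ l : List ι, (∀ a ∈ l, SemiconjBy x (f a) (g a)) →
      SemiconjBy x (l.map f).prod (l.map g).prod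
  | [], _ => SemiconjBy.one_right x
  | a :: l, h => by
    simpa using (h a List.mem_cons_self).mul_right
      (list_prod_map l fun b hb => h b (List.mem_cons_of_mem a hb))

theorem card_filter_lt_add_card_compl_filter_lt {α : Type*} [Fintype α] [DecidableEq α]
    [Preorder α] [LocallyFiniteOrderBot α] [DecidableLT α] (I : Finset α) (i : α) :
    #(I.filter (· < i)) + #(Iᶜ.filter (· < i)) = #(Iio i) := by
  rw [← card_union_of_disjoint (disjoint_filter_filter disjoint_compl_right),
    ← filter_union, union_compl]
  congr 1
  ext
  simp

section Single

variable (α : Fin n →₀ ℕ) (I : Finset (Fin n)) (c : ℂ)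

theorem opX_single (i : Fin n) :
    opX n i (Finsupp.single (α, I) c)
      = (α i : ℂ) • Finsupp.single (α.update i (α i - 1), I) c := by
  simp [opX]

theorem opTheta_single (i : Fin n) :
    opTheta n i (Finsupp.single (α, I) c)
      = if i ∈ I then (-1 : ℂ) ^ #(I.filter (· < i)) • Finsupp.single (α, I.erase i) c
        else 0 := by
  unfold opTheta
  split_ifs <;> simp [*]

theorem opPsi_single (i : Fin n) :
    opPsi n i (Finsupp.single (α, I) c)
      = if i ∈ I then 0
        else (-1 : ℂ) ^ #(I.filter (· < i)) • Finsupp.single (α, insert i I) c := by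
  unfold opPsi
  split_ifs <;> simp [*]

theorem hodgeStar_single :
    hodgeStar n (Finsupp.single (α, I) c)
      = (-1 : ℂ) ^ (∑ i ∈ I, (i : ℕ)) • Finsupp.single (α, Iᶜ) c := by
  simp [hodgeStar]

end Single

theorem semiconjBy_hodgeStar_opTheta (i : Fin n) :
    SemiconjBy (hodgeStar n) (opTheta n i) (opPsi n i) := by
  refine Finsupp.lhom_ext fun ⟨α, I⟩ c => ?_
  by_cases hi : i ∈ I
  · have hsum := sum_erase_add I (fun j : Fin n => (j : ℕ)) hi
    have hcard := card_filter_lt_add_card_compl_filter_lt I i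
    rw [Fin.card_Iio] at hcard
    have hexp : ∑ j ∈ I, (j : ℕ) + #(Iᶜ.filter (· < i))
        = (#(I.filter (· < i)) + ∑ j ∈ I.erase i, (j : ℕ)) + 2 * #(Iᶜ.filter (· < i)) := by
      omega
    simp only [Module.End.mul_apply, opTheta_single, opPsi_single, hodgeStar_single, hi,
      mem_compl, not_true_eq_false, if_true, if_false, map_smul, smul_smul, ← pow_add,
      compl_erase, hexp]
    rw [pow_add _ _ (2 * _), pow_mul, neg_one_sq, one_pow, mul_one]
  · simp only [Module.End.mul_apply, opTheta_single, opPsi_single, hodgeStar_single, hi,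
      mem_compl, not_false_eq_true, if_true, if_false, map_smul, map_zero, smul_zero]

theorem commute_hodgeStar_opX (i : Fin n) : Commute (hodgeStar n) (opX n i) :=
  Finsupp.lhom_ext fun ⟨α, I⟩ c => by
    rw [Module.End.mul_apply, Module.End.mul_apply, opX_single, map_smul, hodgeStar_single,
      hodgeStar_single, map_smul, opX_single, smul_comm]

theorem commute_hodgeStar_opXMon (α : Fin n →₀ ℕ) : Commute (hodgeStar n) (opXMon n α) :=
  Commute.list_prod_right _ _ <| by
    simpa using fun i => (commute_hodgeStar_opX n i).pow_right (α i)

theorem semiconjBy_hodgeStar_opThetaMon (I : Finset (Fin n)) :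
    SemiconjBy (hodgeStar n) (opThetaMon n I) (opPsiMon n I) :=
  SemiconjBy.list_prod_map _ fun i _ => semiconjBy_hodgeStar_opTheta n i

/-- `f ⊙ (★g) = ★(f · g)` for all super-polynomials `f, g`. -/
theorem odot_hodgeStar (f g : SuperPoly n) :
    odot n f (hodgeStar n g) = hodgeStar n (cdot n f g) := by
  rw [odot, cdot, map_finsuppSum]
  refine Finsupp.sum_congr fun b _ => ?_
  have hconj : SemiconjBy (hodgeStar n) (opXMon n b.1 * opThetaMon n b.2)
      (opXMon n b.1 * opPsiMon n b.2) :=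
    SemiconjBy.mul_right (commute_hodgeStar_opXMon n b.1) (semiconjBy_hodgeStar_opThetaMon n b.2)
  rw [map_smul, ← Module.End.mul_apply, ← hconj.eq, Module.End.mul_apply]
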